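/- arXiv:1810.12362 — 9 statements merged into one kernel-verified Lean document; each statement's English description precedes it below -/
import Mathlib

section
/- For any elements P₁,...,P₄ of the subalgebra 𝒜 ⊂ UT₄(F) (matrices with zero (2,3) entry), the product of commutators [P₁,P₂][P₃,P₄] is a matrix all of whose entries are zero except possibly the (1,4) entry. -/
open Matrix

/-- The 4×4 antidiagonal permutation matrix. -/
def J4 (F : Type*) [Field F] : Matrix (Fin 4) (Fin 4) F :=
  Matrix.of fun i j => if (i : ℕ) + (j : ℕ) = 3 then 1 else 0

/-- The reflection involution A ↦ J Aᵀ J on 4×4 matrices. -/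
def reflInv {F : Type*} [Field F] (A : Matrix (Fin 4) (Fin 4) F) : Matrix (Fin 4) (Fin 4) F :=
  J4 F * Aᵀ * J4 F

/-- Upper triangular 4×4 matrices. -/
def UT4 {F : Type*} [Field F] (A : Matrix (Fin 4) (Fin 4) F) : Prop :=
  A.BlockTriangular (id : Fin 4 → Fin 4)

/-- The subalgebra 𝒜: upper triangular with (2,3) entry (zero-indexed (1,2)) equal to zero. -/
def memA {F : Type*} [Field F] (A : Matrix (Fin 4) (Fin 4) F) : Prop :=
  UT4 A ∧ A 1 2 = 0

lemma memA_entries {F : Type*} [Field F] {A : Matrix (Fin 4) (Fin 4) F} (h : memA A) :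
    A 1 0 = 0 ∧ A 2 0 = 0 ∧ A 2 1 = 0 ∧ A 3 0 = 0 ∧ A 3 1 = 0 ∧ A 3 2 = 0 ∧ A 1 2 = 0 := by
  obtain ⟨t, z⟩ := h
  exact ⟨t (by decide), t (by decide), t (by decide), t (by decide), t (by decide),
    t (by decide), z⟩

set_option maxHeartbeats 2000000 in
theorem comm_prod_supported_e14 {F : Type*} [Field F]
    (P₁ P₂ P₃ P₄ : Matrix (Fin 4) (Fin 4) F)
    (h₁ : memA P₁) (h₂ : memA P₂) (h₃ : memA P₃) (h₄ : memA P₄) :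
    ∀ i j : Fin 4, ¬(i = 0 ∧ j = 3) →
      ((P₁ * P₂ - P₂ * P₁) * (P₃ * P₄ - P₄ * P₃)) i j = 0 := by
  obtain ⟨a₁, b₁, c₁, d₁, e₁, f₁, g₁⟩ := memA_entries h₁
  obtain ⟨a₂, b₂, c₂, d₂, e₂, f₂, g₂⟩ := memA_entries h₂
  obtain ⟨a₃, b₃, c₃, d₃, e₃, f₃, g₃⟩ := memA_entries h₃
  obtain ⟨a₄, b₄, c₄, d₄, e₄, f₄, g₄⟩ := memA_entries h₄
  intro i j hij
  fin_cases i <;> fin_cases j <;>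
    simp only [Fin.zero_eta, Fin.mk_one, Fin.reduceFinMk] at hij ⊢
  pick_goal 4
  · simp at hij
  all_goals
    simp only [Matrix.mul_apply, Matrix.sub_apply, Fin.sum_univ_four,
      a₁, b₁, c₁, d₁, e₁, f₁, g₁, a₂, b₂, c₂, d₂, e₂, f₂, g₂,
      a₃, b₃, c₃, d₃, e₃, f₃, g₃, a₄, b₄, c₄, d₄, e₄, f₄, g₄]
  all_goals ring
end

section
/- For any P₁,...,P₆ ∈ 𝒜, the triple product of commutators [P₁,P₂][P₃,P₄][P₅,P₆] = 0. In other words, v₁v₂v₃ with each vᵢ a commutator is a polynomial identity of 𝒜. -/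
open Matrix

/-- Structural condition satisfied by commutators of elements of 𝒜. -/
def commS {F : Type*} [Field F] (c : Matrix (Fin 4) (Fin 4) F) : Prop :=
  c 0 0 = 0 ∧ c 1 1 = 0 ∧ c 2 2 = 0 ∧ c 3 3 = 0 ∧ c 1 2 = 0 ∧
  c 1 0 = 0 ∧ c 2 0 = 0 ∧ c 2 1 = 0 ∧ c 3 0 = 0 ∧ c 3 1 = 0 ∧ c 3 2 = 0

lemma comm_commS {F : Type*} [Field F] (a b : Matrix (Fin 4) (Fin 4) F)
    (ha : memA a) (hb : memA b) : commS (a * b - b * a) := by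
  obtain ⟨ha1, ha2⟩ := ha
  obtain ⟨hb1, hb2⟩ := hb
  have a10 : a 1 0 = 0 := ha1 (by decide)
  have a20 : a 2 0 = 0 := ha1 (by decide)
  have a21 : a 2 1 = 0 := ha1 (by decide)
  have a30 : a 3 0 = 0 := ha1 (by decide)
  have a31 : a 3 1 = 0 := ha1 (by decide)
  have a32 : a 3 2 = 0 := ha1 (by decide)
  have b10 : b 1 0 = 0 := hb1 (by decide)
  have b20 : b 2 0 = 0 := hb1 (by decide)
  have b21 : b 2 1 = 0 := hb1 (by decide)
  have b30 : b 3 0 = 0 := hb1 (by decide)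
  have b31 : b 3 1 = 0 := hb1 (by decide)
  have b32 : b 3 2 = 0 := hb1 (by decide)
  refine ⟨?_, ?_, ?_, ?_, ?_, ?_, ?_, ?_, ?_, ?_, ?_⟩ <;>
    simp [Matrix.mul_apply, Matrix.sub_apply, Fin.sum_univ_four,
      a10, a20, a21, a30, a31, a32, ha2, b10, b20, b21, b30, b31, b32, hb2] <;>
    ring

lemma prod3_commS_zero {F : Type*} [Field F] (c₁ c₂ c₃ : Matrix (Fin 4) (Fin 4) F)
    (h1 : commS c₁) (h2 : commS c₂) (h3 : commS c₃) : c₁ * c₂ * c₃ = 0 := by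
  obtain ⟨p0, p1, p2, p3, p4, p5, p6, p7, p8, p9, p10⟩ := h1
  obtain ⟨q0, q1, q2, q3, q4, q5, q6, q7, q8, q9, q10⟩ := h2
  obtain ⟨r0, r1, r2, r3, r4, r5, r6, r7, r8, r9, r10⟩ := h3
  ext i j
  fin_cases i <;> fin_cases j <;>
    simp [Matrix.mul_apply, Fin.sum_univ_four,
      p0, p1, p2, p3, p4, p5, p6, p7, p8, p9, p10,
      q0, q1, q2, q3, q4, q5, q6, q7, q8, q9, q10,
      r0, r1, r2, r3, r4, r5, r6, r7, r8, r9, r10]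

theorem triple_comm_prod_zero {F : Type*} [Field F]
    (P₁ P₂ P₃ P₄ P₅ P₆ : Matrix (Fin 4) (Fin 4) F)
    (h₁ : memA P₁) (h₂ : memA P₂) (h₃ : memA P₃) (h₄ : memA P₄)
    (h₅ : memA P₅) (h₆ : memA P₆) :
    (P₁ * P₂ - P₂ * P₁) * (P₃ * P₄ - P₄ * P₃) * (P₅ * P₆ - P₆ * P₅) = 0 := by
  exact prod3_commS_zero _ _ _ (comm_commS _ _ h₁ h₂) (comm_commS _ _ h₃ h₄)
    (comm_commS _ _ h₅ h₆)
end

section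
/- Let Y ∈ 𝒜 be symmetric (Y* = Y) for the reflection involution. Then there is α ∈ F such that Q₁ Y Q₂ = α Q₁ Q₂ for all Q₁, Q₂ ∈ 𝒜 of the block form Qᵢ = (αᵢ e₁₂, Θᵢ; 0, βᵢ e₁₂) with αᵢ, βᵢ ∈ F and Θᵢ ∈ UT₂(F). -/
open Matrix

/-- The block form Q = (α e₁₂, Θ; 0, β e₁₂) with Θ ∈ UT₂(F), written entrywise. -/
def QForm {F : Type*} [Field F] (Q : Matrix (Fin 4) (Fin 4) F) : Prop :=
  UT4 Q ∧ Q 0 0 = 0 ∧ Q 1 1 = 0 ∧ Q 2 2 = 0 ∧ Q 3 3 = 0 ∧ Q 1 2 = 0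

/-!
The first column and the last row of a matrix of the form `QForm` vanish, i.e.
`Q₁ = Q₁ * diag(0,1,1,1)` and `Q₂ = diag(1,1,1,0) * Q₂`. Hence `Q₁ * Y * Q₂` only sees the block of
`Y` with rows `1,2,3` and columns `0,1,2` (zero-indexed), which for `Y ∈ 𝒜` is `diag(0, Y₁₁, Y₂₂, 0)`.
The reflection involution swaps the two middle diagonal entries, so a symmetric `Y` has
`Y₁₁ = Y₂₂` and the block is `Y₁₁ • diag(0,1,1,0)`, which acts like the identity between `Q₁` and `Q₂`.
-/

section

variable {F : Type*} [Field F]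

theorem reflInv_apply_one_one (A : Matrix (Fin 4) (Fin 4) F) : reflInv A 1 1 = A 2 2 := by
  simp [reflInv, J4, mul_apply, Fin.sum_univ_four]

namespace QForm

variable {Q : Matrix (Fin 4) (Fin 4) F} (hQ : QForm Q)
include hQ

theorem apply_zero_right (i : Fin 4) : Q i 0 = 0 := by
  fin_cases i
  · exact hQ.2.1
  all_goals exact hQ.1 (by decide)

theorem apply_three_left (j : Fin 4) : Q 3 j = 0 := by
  fin_cases j
  iterate 3 exact hQ.1 (by decide)
  exact hQ.2.2.2.2.1

theorem mul_diagonal_eq_self : Q * diagonal ![0, 1, 1, 1] = Q := by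
  ext i j
  fin_cases j <;> simp [mul_diagonal, hQ.apply_zero_right]

theorem diagonal_mul_eq_self : diagonal ![1, 1, 1, 0] * Q = Q := by
  ext i j
  fin_cases i <;> simp [diagonal_mul, hQ.apply_three_left]

end QForm

theorem memA.diagonal_mul_mul_diagonal {Y : Matrix (Fin 4) (Fin 4) F} (hY : memA Y)
    (h : Y 1 1 = Y 2 2) :
    diagonal ![0, 1, 1, 1] * Y * diagonal ![1, 1, 1, 0] = Y 1 1 • diagonal ![0, 1, 1, 0] := by
  obtain ⟨hYut, hY12⟩ := hY
  have hlow : ∀ i j : Fin 4, j < i → Y i j = 0 := fun _ _ hji => hYut hji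
  ext i j
  fin_cases i <;> fin_cases j <;> simp [diagonal_mul, mul_diagonal, hY12, h, hlow]

end

theorem symmetric_Y_scalar_action {F : Type*} [Field F]
    (Y : Matrix (Fin 4) (Fin 4) F) (hY : memA Y) (hYs : reflInv Y = Y) :
    ∃ α : F, ∀ Q₁ Q₂ : Matrix (Fin 4) (Fin 4) F,
      QForm Q₁ → QForm Q₂ → Q₁ * Y * Q₂ = α • (Q₁ * Q₂) := by
  have hY_diag : Y 1 1 = Y 2 2 := by simpa [hYs] using reflInv_apply_one_one Y
  have hE : diagonal ![0, 1, 1, 1] * diagonal ![1, 1, 1, 0] =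
      (diagonal ![0, 1, 1, 0] : Matrix (Fin 4) (Fin 4) F) := by
    rw [diagonal_mul_diagonal]
    congr 1
    ext i
    fin_cases i <;> simp
  refine ⟨Y 1 1, fun Q₁ Q₂ hQ₁ hQ₂ => ?_⟩
  calc Q₁ * Y * Q₂
      = Q₁ * (diagonal ![0, 1, 1, 1] * Y * diagonal ![1, 1, 1, 0]) * Q₂ := by
        conv_lhs => rw [← hQ₁.mul_diagonal_eq_self, ← hQ₂.diagonal_mul_eq_self]
        simp only [Matrix.mul_assoc]
    _ = Y 1 1 • (Q₁ * diagonal ![0, 1, 1, 1] * (diagonal ![1, 1, 1, 0] * Q₂)) := by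
        rw [hY.diagonal_mul_mul_diagonal hY_diag, ← hE]
        simp only [Matrix.mul_smul, Matrix.smul_mul, Matrix.mul_assoc]
    _ = Y 1 1 • (Q₁ * Q₂) := by
        rw [hQ₁.mul_diagonal_eq_self, hQ₂.diagonal_mul_eq_self]
end

section
/- For any symmetric elements P₁,...,P₅ ∈ 𝒜 (Pᵢ* = Pᵢ or more generally Pᵢ symmetric or skew-symmetric), the products [P₁,P₂]P₃[P₄,P₅] and [P₁,P₂][P₃,P₄]P₅ are symmetric: ([P₁,P₂]P₃[P₄,P₅])* = [P₁,P₂]P₃[P₄,P₅] and ([P₁,P₂][P₃,P₄]P₅)* = [P₁,P₂][P₃,P₄]P₅. -/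
open Matrix

/-- Auxiliary: upper triangular with (1,2) entry zero, entrywise. -/
def myU {F : Type*} [Field F] (A : Matrix (Fin 4) (Fin 4) F) : Prop :=
  A 1 0 = 0 ∧ A 2 0 = 0 ∧ A 2 1 = 0 ∧ A 3 0 = 0 ∧ A 3 1 = 0 ∧ A 3 2 = 0 ∧ A 1 2 = 0

/-- Auxiliary: strictly upper triangular with (1,2) entry zero. -/
def myS {F : Type*} [Field F] (A : Matrix (Fin 4) (Fin 4) F) : Prop :=
  myU A ∧ A 0 0 = 0 ∧ A 1 1 = 0 ∧ A 2 2 = 0 ∧ A 3 3 = 0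

lemma memA_myU {F : Type*} [Field F] (A : Matrix (Fin 4) (Fin 4) F) (h : memA A) : myU A := by
  obtain ⟨ht, h12⟩ := h
  exact ⟨ht (show id (0:Fin 4) < id 1 by decide), ht (show id (0:Fin 4) < id 2 by decide),
    ht (show id (1:Fin 4) < id 2 by decide), ht (show id (0:Fin 4) < id 3 by decide),
    ht (show id (1:Fin 4) < id 3 by decide), ht (show id (2:Fin 4) < id 3 by decide), h12⟩

lemma myU_one {F : Type*} [Field F] : myU (1 : Matrix (Fin 4) (Fin 4) F) := by
  refine ⟨?_,?_,?_,?_,?_,?_,?_⟩ <;> simp [Matrix.one_apply]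

lemma myU_comm {F : Type*} [Field F] (A B : Matrix (Fin 4) (Fin 4) F)
    (hA : myU A) (hB : myU B) : myS (A * B - B * A) := by
  obtain ⟨a1,a2,a3,a4,a5,a6,a7⟩ := hA
  obtain ⟨b1,b2,b3,b4,b5,b6,b7⟩ := hB
  refine ⟨⟨?_,?_,?_,?_,?_,?_,?_⟩,?_,?_,?_,?_⟩ <;>
    simp [Matrix.mul_apply, Fin.sum_univ_four, a1,a2,a3,a4,a5,a6,a7,b1,b2,b3,b4,b5,b6,b7] <;>
    ring

lemma myS_mul_myU {F : Type*} [Field F] (X C : Matrix (Fin 4) (Fin 4) F)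
    (hX : myS X) (hC : myU C) : myS (X * C) := by
  obtain ⟨⟨a1,a2,a3,a4,a5,a6,a7⟩,d0,d1,d2,d3⟩ := hX
  obtain ⟨b1,b2,b3,b4,b5,b6,b7⟩ := hC
  refine ⟨⟨?_,?_,?_,?_,?_,?_,?_⟩,?_,?_,?_,?_⟩ <;>
    simp [Matrix.mul_apply, Fin.sum_univ_four, a1,a2,a3,a4,a5,a6,a7,b1,b2,b3,b4,b5,b6,b7,d0,d1,d2,d3]

lemma prod_fix {F : Type*} [Field F] (X C Z : Matrix (Fin 4) (Fin 4) F)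
    (hX : myS X) (hC : myU C) (hZ : myS Z) : reflInv (X * C * Z) = X * C * Z := by
  obtain ⟨⟨a1,a2,a3,a4,a5,a6,a7⟩,e0,e1,e2,e3⟩ := hX
  obtain ⟨b1,b2,b3,b4,b5,b6,b7⟩ := hC
  obtain ⟨⟨c1,c2,c3,c4,c5,c6,c7⟩,f0,f1,f2,f3⟩ := hZ
  ext i j
  fin_cases i <;> fin_cases j <;>
    simp [reflInv, J4, Matrix.mul_apply, Fin.sum_univ_four,
      a1,a2,a3,a4,a5,a6,a7,b1,b2,b3,b4,b5,b6,b7,c1,c2,c3,c4,c5,c6,c7,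
      e0,e1,e2,e3,f0,f1,f2,f3, show ((3:Fin 4):ℕ) = 3 from rfl,
      show ((2:Fin 4):ℕ) = 2 from rfl, show ((1:Fin 4):ℕ) = 1 from rfl]
  all_goals try norm_num
  all_goals ring

theorem comm_products_symmetric {F : Type*} [Field F]
    (P₁ P₂ P₃ P₄ P₅ : Matrix (Fin 4) (Fin 4) F)
    (h₁ : memA P₁) (h₂ : memA P₂) (h₃ : memA P₃) (h₄ : memA P₄) (h₅ : memA P₅)
    (s₁ : reflInv P₁ = P₁ ∨ reflInv P₁ = -P₁)
    (s₂ : reflInv P₂ = P₂ ∨ reflInv P₂ = -P₂)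
    (s₃ : reflInv P₃ = P₃ ∨ reflInv P₃ = -P₃)
    (s₄ : reflInv P₄ = P₄ ∨ reflInv P₄ = -P₄)
    (s₅ : reflInv P₅ = P₅ ∨ reflInv P₅ = -P₅) :
    reflInv ((P₁ * P₂ - P₂ * P₁) * P₃ * (P₄ * P₅ - P₅ * P₄)) =
      (P₁ * P₂ - P₂ * P₁) * P₃ * (P₄ * P₅ - P₅ * P₄) ∧
    reflInv ((P₁ * P₂ - P₂ * P₁) * (P₃ * P₄ - P₄ * P₃) * P₅) =
      (P₁ * P₂ - P₂ * P₁) * (P₃ * P₄ - P₄ * P₃) * P₅ := by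
  have u₁ := memA_myU P₁ h₁
  have u₂ := memA_myU P₂ h₂
  have u₃ := memA_myU P₃ h₃
  have u₄ := memA_myU P₄ h₄
  have u₅ := memA_myU P₅ h₅
  constructor
  · exact prod_fix _ _ _ (myU_comm P₁ P₂ u₁ u₂) u₃ (myU_comm P₄ P₅ u₄ u₅)
  · have key : (P₁ * P₂ - P₂ * P₁) * (P₃ * P₄ - P₄ * P₃) * P₅ =
        (P₁ * P₂ - P₂ * P₁) * 1 * ((P₃ * P₄ - P₄ * P₃) * P₅) := by
      rw [mul_one, mul_assoc]
    rw [key]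
    exact prod_fix _ _ _ (myU_comm P₁ P₂ u₁ u₂) myU_one
      (myS_mul_myU _ _ (myU_comm P₃ P₄ u₃ u₄) u₅)
end

section
/- For any symmetric elements Y₁, Y₂, Y₃, Y₄ of 𝒜 (Yᵢ* = Yᵢ), assuming char F ≠ 2, the identity [Y₄,Y₃][Y₂,Y₁] + [Y₃,Y₂][Y₄,Y₁] + [Y₂,Y₄][Y₃,Y₁] = 0 holds. -/
open Matrix

lemma canon {F : Type*} [Field F] (A : Matrix (Fin 4) (Fin 4) F)
    (h : memA A) (s : reflInv A = A) :
    A = !![A 0 0, A 0 1, A 0 2, A 0 3;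
           0, A 1 1, 0, A 0 2;
           0, 0, A 1 1, A 0 1;
           0, 0, 0, A 0 0] := by
  obtain ⟨ht, h12⟩ := h
  have e11 := congrFun (congrFun s 1) 1
  have e13 := congrFun (congrFun s 1) 3
  have e23 := congrFun (congrFun s 2) 3
  have e33 := congrFun (congrFun s 3) 3
  have v2 : ((2 : Fin 4) : ℕ) = 2 := rfl
  have v3 : ((3 : Fin 4) : ℕ) = 3 := rfl
  simp [reflInv, J4, Matrix.mul_apply, Fin.sum_univ_four, v2, v3] at e11 e13 e23 e33
  have z10 : A 1 0 = 0 := ht (show (id (0:Fin 4)) < id 1 by decide)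
  have z20 : A 2 0 = 0 := ht (show (id (0:Fin 4)) < id 2 by decide)
  have z30 : A 3 0 = 0 := ht (show (id (0:Fin 4)) < id 3 by decide)
  have z21 : A 2 1 = 0 := ht (show (id (1:Fin 4)) < id 2 by decide)
  have z31 : A 3 1 = 0 := ht (show (id (1:Fin 4)) < id 3 by decide)
  have z32 : A 3 2 = 0 := ht (show (id (2:Fin 4)) < id 3 by decide)
  ext i j
  fin_cases i <;> fin_cases j <;>
    simp_all [Matrix.vecHead, Matrix.vecTail]

set_option maxHeartbeats 1600000 in
lemma commK {F : Type*} [Field F] (a b c d e a' b' c' d' e' : F) :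
    (!![a,b,c,e;0,d,0,c;0,0,d,b;0,0,0,a] : Matrix (Fin 4) (Fin 4) F) *
      !![a',b',c',e';0,d',0,c';0,0,d',b';0,0,0,a'] -
    !![a',b',c',e';0,d',0,c';0,0,d',b';0,0,0,a'] *
      !![a,b,c,e;0,d,0,c;0,0,d,b;0,0,0,a] =
    !![0, a*b'+b*d'-a'*b-b'*d, a*c'+c*d'-a'*c-c'*d, 0;
       0, 0, 0, -(a*c'+c*d'-a'*c-c'*d);
       0, 0, 0, -(a*b'+b*d'-a'*b-b'*d);
       0, 0, 0, 0] := by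
  ext i j
  fin_cases i <;> fin_cases j <;>
    · simp [Matrix.mul_apply, Fin.sum_univ_four, Matrix.vecHead, Matrix.vecTail]
      try ring

set_option maxHeartbeats 1600000 in
lemma prodK {F : Type*} [Field F] (β γ β' γ' : F) :
    (!![0, β, γ, 0; 0, 0, 0, -γ; 0, 0, 0, -β; 0, 0, 0, 0] : Matrix (Fin 4) (Fin 4) F) *
      !![0, β', γ', 0; 0, 0, 0, -γ'; 0, 0, 0, -β'; 0, 0, 0, 0] =
    !![0, 0, 0, -(β*γ'+γ*β'); 0, 0, 0, 0; 0, 0, 0, 0; 0, 0, 0, 0] := by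
  ext i j
  fin_cases i <;> fin_cases j <;>
    · simp [Matrix.mul_apply, Fin.sum_univ_four, Matrix.vecHead, Matrix.vecTail]
      try ring

lemma sumE {F : Type*} [Field F] (x y z : F) (h : x + y + z = 0) :
    (!![0, 0, 0, x; 0, 0, 0, 0; 0, 0, 0, 0; 0, 0, 0, 0] : Matrix (Fin 4) (Fin 4) F) +
    !![0, 0, 0, y; 0, 0, 0, 0; 0, 0, 0, 0; 0, 0, 0, 0] +
    !![0, 0, 0, z; 0, 0, 0, 0; 0, 0, 0, 0; 0, 0, 0, 0] = 0 := by
  ext i j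
  fin_cases i <;> fin_cases j <;> simp [h, Matrix.vecHead, Matrix.vecTail]

theorem symmetric_comm_identity {F : Type*} [Field F] (h2 : (2 : F) ≠ 0)
    (Y₁ Y₂ Y₃ Y₄ : Matrix (Fin 4) (Fin 4) F)
    (h₁ : memA Y₁) (h₂ : memA Y₂) (h₃ : memA Y₃) (h₄ : memA Y₄)
    (s₁ : reflInv Y₁ = Y₁) (s₂ : reflInv Y₂ = Y₂)
    (s₃ : reflInv Y₃ = Y₃) (s₄ : reflInv Y₄ = Y₄) :
    (Y₄ * Y₃ - Y₃ * Y₄) * (Y₂ * Y₁ - Y₁ * Y₂) +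
    (Y₃ * Y₂ - Y₂ * Y₃) * (Y₄ * Y₁ - Y₁ * Y₄) +
    (Y₂ * Y₄ - Y₄ * Y₂) * (Y₃ * Y₁ - Y₁ * Y₃) = 0 := by
  rw [canon Y₁ h₁ s₁, canon Y₂ h₂ s₂, canon Y₃ h₃ s₃, canon Y₄ h₄ s₄]
  rw [commK, commK, commK, commK, commK, commK, prodK, prodK, prodK]
  apply sumE
  ring
end

section
/- Let Y = (0 I₂; 0 0) ∈ 𝒜 and Yᵢ = (Aᵢ 0; 0 Aᵢ*) with Aᵢ ∈ UT₂(F). Then for n ≥ 3, the left-normed commutator [Y, Y₃, ..., Yₙ] times [Y₂,Y₁] equals the matrix with 2×2 block decomposition (0, -[A₂,A₁,A₃,...,Aₙ]; 0, 0), where [A₂,A₁,A₃,...,Aₙ] is the left-normed commutator in UT₂(F). -/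
open Matrix

/-- The 2×2 antidiagonal permutation matrix. -/
def J2 (F : Type*) [Field F] : Matrix (Fin 2) (Fin 2) F := !![0, 1; 1, 0]

/-- The reflection involution A ↦ J Aᵀ J on 2×2 matrices. -/
def refl2 {F : Type*} [Field F] (A : Matrix (Fin 2) (Fin 2) F) : Matrix (Fin 2) (Fin 2) F :=
  J2 F * Aᵀ * J2 F

/-- Upper triangular 2×2 matrices. -/
def UT2 {F : Type*} [Field F] (A : Matrix (Fin 2) (Fin 2) F) : Prop :=
  A.BlockTriangular (id : Fin 2 → Fin 2)

/-- Commutator. -/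
def cm {M : Type*} [Ring M] (a b : M) : M := a * b - b * a

/-- Left-normed commutator [x, L₁, L₂, ...]. -/
def lcomm {M : Type*} [Ring M] (x : M) (L : List M) : M := L.foldl cm x

/-- The element (A 0; 0 A*) of 𝒜. -/
def diagY {F : Type*} [Field F] (A : Matrix (Fin 2) (Fin 2) F) :
    Matrix (Fin 2 ⊕ Fin 2) (Fin 2 ⊕ Fin 2) F :=
  Matrix.fromBlocks A 0 0 (refl2 A)

section Aux
variable {F : Type*} [Field F]

lemma refl2_eq (A : Matrix (Fin 2) (Fin 2) F) :
    refl2 A = !![A 1 1, A 0 1; A 1 0, A 0 0] := by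
  ext i j
  fin_cases i <;> fin_cases j <;>
    simp [refl2, J2, Matrix.mul_apply, Matrix.vecMul, dotProduct, Fin.sum_univ_two]

lemma ut_entry {A : Matrix (Fin 2) (Fin 2) F} (h : UT2 A) : A 1 0 = 0 :=
  h (show (id (0 : Fin 2)) < id 1 by decide)

lemma fromBlocks_sub' {n l m o : Type*} (A A' : Matrix n l F) (B B' : Matrix n m F)
    (C C' : Matrix o l F) (D D' : Matrix o m F) :
    Matrix.fromBlocks A B C D - Matrix.fromBlocks A' B' C' D' =
      Matrix.fromBlocks (A - A') (B - B') (C - C') (D - D') := by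
  simp [sub_eq_add_neg, Matrix.fromBlocks_neg, Matrix.fromBlocks_add]

lemma cm_entries {A₁ A₂ : Matrix (Fin 2) (Fin 2) F} (h₁ : UT2 A₁) (h₂ : UT2 A₂) :
    (cm A₂ A₁) 1 0 = 0 ∧ (cm A₂ A₁) 0 0 = 0 ∧ (cm A₂ A₁) 1 1 = 0 := by
  have e1 := ut_entry h₁
  have e2 := ut_entry h₂
  refine ⟨?_, ?_, ?_⟩ <;>
    simp [cm, Matrix.sub_apply, Matrix.mul_apply, Fin.sum_univ_two, e1, e2] <;> ring

lemma swap_mul {A C : Matrix (Fin 2) (Fin 2) F} (hA : UT2 A)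
    (hC : C 1 0 = 0 ∧ C 0 0 = 0 ∧ C 1 1 = 0) :
    refl2 A * C = C * A := by
  have eA := ut_entry hA
  obtain ⟨c1, c2, c3⟩ := hC
  rw [refl2_eq]
  ext i j
  fin_cases i <;> fin_cases j <;>
    simp [Matrix.mul_apply, Fin.sum_univ_two, eA, c1, c2, c3] <;> ring

lemma cm_refl {A₁ A₂ : Matrix (Fin 2) (Fin 2) F} (h₁ : UT2 A₁) (h₂ : UT2 A₂) :
    cm (refl2 A₂) (refl2 A₁) = -(cm A₂ A₁) := by
  have e1 := ut_entry h₁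
  have e2 := ut_entry h₂
  rw [refl2_eq, refl2_eq]
  ext i j
  fin_cases i <;> fin_cases j <;>
    simp [cm, Matrix.sub_apply, Matrix.neg_apply, Matrix.mul_apply, Fin.sum_univ_two,
      e1, e2] <;> ring

lemma cm_diagY {A₁ A₂ : Matrix (Fin 2) (Fin 2) F} (h₁ : UT2 A₁) (h₂ : UT2 A₂) :
    cm (diagY A₂) (diagY A₁) = Matrix.fromBlocks (cm A₂ A₁) 0 0 (-(cm A₂ A₁)) := by
  show diagY A₂ * diagY A₁ - diagY A₁ * diagY A₂ = _
  simp only [diagY, Matrix.fromBlocks_multiply, Matrix.mul_zero, Matrix.zero_mul,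
    add_zero, zero_add, fromBlocks_sub']
  rw [show A₂ * A₁ - A₁ * A₂ = cm A₂ A₁ from rfl,
    show refl2 A₂ * refl2 A₁ - refl2 A₁ * refl2 A₂ = cm (refl2 A₂) (refl2 A₁) from rfl,
    cm_refl h₁ h₂, sub_zero]

lemma cm_block (X A : Matrix (Fin 2) (Fin 2) F) :
    cm (Matrix.fromBlocks 0 X 0 0) (diagY A) =
      Matrix.fromBlocks 0 (X * refl2 A - A * X) 0 0 := by
  show Matrix.fromBlocks 0 X 0 0 * diagY A - diagY A * Matrix.fromBlocks 0 X 0 0 = _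
  simp only [diagY, Matrix.fromBlocks_multiply, Matrix.mul_zero, Matrix.zero_mul,
    add_zero, zero_add, fromBlocks_sub']
  simp

lemma key {A₁ A₂ : Matrix (Fin 2) (Fin 2) F} (h₁ : UT2 A₁) (h₂ : UT2 A₂) :
    ∀ (As : List (Matrix (Fin 2) (Fin 2) F)), (∀ A ∈ As, UT2 A) →
      ∀ X : Matrix (Fin 2) (Fin 2) F,
      (As.map diagY).foldl cm (Matrix.fromBlocks 0 X 0 0) * cm (diagY A₂) (diagY A₁) =
        Matrix.fromBlocks 0 (-(As.foldl cm (X * cm A₂ A₁))) 0 0 := by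
  intro As
  induction As with
  | nil =>
      intro _ X
      rw [cm_diagY h₁ h₂]
      simp [Matrix.fromBlocks_multiply]
  | cons A rest ih =>
      intro hUT X
      have hA : UT2 A := hUT A (by simp)
      have hrest : ∀ B ∈ rest, UT2 B := fun B hB => hUT B (by simp [hB])
      have hswap := swap_mul hA (cm_entries h₁ h₂)
      have hstart : (X * refl2 A - A * X) * cm A₂ A₁ = cm (X * cm A₂ A₁) A := by
        simp only [cm] at hswap ⊢
        rw [sub_mul, mul_assoc, hswap]
        noncomm_ring
      simp only [List.map_cons, List.foldl_cons, cm_block]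
      rw [ih hrest (X * refl2 A - A * X), hstart]

end Aux

theorem lcomm_Y_formula {F : Type*} [Field F]
    (A₁ A₂ : Matrix (Fin 2) (Fin 2) F) (h₁ : UT2 A₁) (h₂ : UT2 A₂)
    (As : List (Matrix (Fin 2) (Fin 2) F)) (hAs : As ≠ []) (hUT : ∀ A ∈ As, UT2 A) :
    lcomm (Matrix.fromBlocks 0 (1 : Matrix (Fin 2) (Fin 2) F) 0 0) (As.map diagY) *
        cm (diagY A₂) (diagY A₁) =
      Matrix.fromBlocks 0 (-(lcomm (cm A₂ A₁) As)) 0 0 := by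
  have := key h₁ h₂ As hUT 1
  simpa [lcomm] using this
end

section
/- Let Y = (0 I₂; 0 0) ∈ 𝒜 and Yᵢ = (Aᵢ 0; 0 Aᵢ*) with Aᵢ ∈ UT₂(F). Then for n ≥ 4, [Y₃,...,Yₙ,Y]·[Y₂,Y₁] = 0. -/
open Matrix

/-- Strictly upper triangular 2×2 matrices. -/
def SU {F : Type*} [Field F] (A : Matrix (Fin 2) (Fin 2) F) : Prop :=
  A 1 0 = 0 ∧ A 0 0 = 0 ∧ A 1 1 = 0

lemma ut2_iff {F : Type*} [Field F] {A : Matrix (Fin 2) (Fin 2) F} :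
    UT2 A ↔ A 1 0 = 0 := by
  constructor
  · intro h; exact h (show (0 : Fin 2) < 1 by decide)
  · intro h i j hij
    fin_cases i <;> fin_cases j <;> simp_all

lemma su_ut2 {F : Type*} [Field F] {A : Matrix (Fin 2) (Fin 2) F} (h : SU A) : UT2 A :=
  ut2_iff.mpr h.1

lemma refl2_apply {F : Type*} [Field F] (A : Matrix (Fin 2) (Fin 2) F) :
    refl2 A = !![A 1 1, A 0 1; A 1 0, A 0 0] := by
  ext i j
  fin_cases i <;> fin_cases j <;>
    simp [refl2, J2, Matrix.mul_apply, Matrix.vecMul, dotProduct, Fin.sum_univ_two]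

lemma refl2_ut2 {F : Type*} [Field F] {A : Matrix (Fin 2) (Fin 2) F} (h : UT2 A) :
    UT2 (refl2 A) := by
  rw [ut2_iff] at h ⊢
  simp [refl2_apply, h]

lemma su_cm {F : Type*} [Field F] {A B : Matrix (Fin 2) (Fin 2) F} (hA : UT2 A)
    (hB : UT2 B) : SU (cm A B) := by
  rw [ut2_iff] at hA hB
  refine ⟨?_, ?_, ?_⟩ <;>
    simp [cm, Matrix.mul_apply, Fin.sum_univ_two, hA, hB] <;> ring

lemma su_sub {F : Type*} [Field F] {A B : Matrix (Fin 2) (Fin 2) F} (hA : SU A)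
    (hB : SU B) : SU (A - B) := by
  obtain ⟨a1, a2, a3⟩ := hA; obtain ⟨b1, b2, b3⟩ := hB
  refine ⟨?_, ?_, ?_⟩ <;> simp [a1, a2, a3, b1, b2, b3]

lemma su_mul_su {F : Type*} [Field F] {A B : Matrix (Fin 2) (Fin 2) F} (hA : SU A)
    (hB : SU B) : A * B = 0 := by
  obtain ⟨a1, a2, a3⟩ := hA; obtain ⟨b1, b2, b3⟩ := hB
  ext i j
  fin_cases i <;> fin_cases j <;>
    simp [Matrix.mul_apply, Fin.sum_univ_two, a1, a2, a3, b1, b2, b3]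

lemma lcomm_su {F : Type*} [Field F] {x : Matrix (Fin 2) (Fin 2) F}
    (L : List (Matrix (Fin 2) (Fin 2) F)) (hx : SU x) (hL : ∀ a ∈ L, UT2 a) :
    SU (lcomm x L) := by
  induction L generalizing x with
  | nil => exact hx
  | cons b t ih =>
      have h1 : lcomm x (b :: t) = lcomm (cm x b) t := rfl
      rw [h1]
      exact ih (su_cm (su_ut2 hx) (hL b (by simp))) fun a ha => hL a (by simp [ha])

lemma cm_fromBlocks_diag {F : Type*} [Field F]
    (X Y X' Y' : Matrix (Fin 2) (Fin 2) F) :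
    cm (Matrix.fromBlocks X 0 0 Y) (Matrix.fromBlocks X' 0 0 Y') =
      Matrix.fromBlocks (cm X X') 0 0 (cm Y Y') := by
  simp only [cm, Matrix.fromBlocks_multiply]
  ext (i | i) (j | j) <;>
    simp [Matrix.fromBlocks]

lemma lcomm_fromBlocks {F : Type*} [Field F]
    (X Y : Matrix (Fin 2) (Fin 2) F) (L : List (Matrix (Fin 2) (Fin 2) F)) :
    lcomm (Matrix.fromBlocks X 0 0 Y) (L.map diagY) =
      Matrix.fromBlocks (lcomm X L) 0 0 (lcomm Y (L.map refl2)) := by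
  induction L generalizing X Y with
  | nil => rfl
  | cons b t ih =>
      have h1 : lcomm (Matrix.fromBlocks X 0 0 Y) ((b :: t).map diagY)
          = lcomm (cm (Matrix.fromBlocks X 0 0 Y) (diagY b)) (t.map diagY) := rfl
      rw [h1, show diagY b = Matrix.fromBlocks b 0 0 (refl2 b) from rfl,
        cm_fromBlocks_diag, ih]
      rfl

theorem lcomm_ending_Y_zero {F : Type*} [Field F]
    (A₁ A₂ A₃ : Matrix (Fin 2) (Fin 2) F) (h₁ : UT2 A₁) (h₂ : UT2 A₂) (h₃ : UT2 A₃)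
    (rest : List (Matrix (Fin 2) (Fin 2) F)) (hrest : rest ≠ [])
    (hUT : ∀ A ∈ rest, UT2 A) :
    lcomm (diagY A₃)
        (rest.map diagY ++ [Matrix.fromBlocks 0 (1 : Matrix (Fin 2) (Fin 2) F) 0 0]) *
      cm (diagY A₂) (diagY A₁) = 0 := by
  set C := lcomm A₃ rest with hC
  set C' := lcomm (refl2 A₃) (rest.map refl2) with hC'
  have hCsu : SU C := by
    obtain ⟨r, t, rfl⟩ := List.exists_cons_of_ne_nil hrest
    exact lcomm_su t (su_cm h₃ (hUT r (by simp))) fun a ha => hUT a (by simp [ha])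
  have hC'su : SU C' := by
    obtain ⟨r, t, rfl⟩ := List.exists_cons_of_ne_nil hrest
    have : lcomm (refl2 A₃) ((r :: t).map refl2)
        = lcomm (cm (refl2 A₃) (refl2 r)) (t.map refl2) := rfl
    rw [hC', this]
    refine lcomm_su _ (su_cm (refl2_ut2 h₃) (refl2_ut2 (hUT r (by simp)))) ?_
    intro a ha
    simp only [List.mem_map] at ha
    obtain ⟨b, hb, rfl⟩ := ha
    exact refl2_ut2 (hUT b (by simp [hb]))
  have hsplit : lcomm (diagY A₃)
      (rest.map diagY ++ [Matrix.fromBlocks 0 (1 : Matrix (Fin 2) (Fin 2) F) 0 0])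
      = cm (lcomm (diagY A₃) (rest.map diagY))
          (Matrix.fromBlocks 0 (1 : Matrix (Fin 2) (Fin 2) F) 0 0) := by
    simp [lcomm, List.foldl_append]
  have hdiag : lcomm (diagY A₃) (rest.map diagY) = Matrix.fromBlocks C 0 0 C' := by
    rw [show diagY A₃ = Matrix.fromBlocks A₃ 0 0 (refl2 A₃) from rfl, lcomm_fromBlocks]
  have hY : cm (Matrix.fromBlocks C 0 0 C')
      (Matrix.fromBlocks 0 (1 : Matrix (Fin 2) (Fin 2) F) 0 0)
      = Matrix.fromBlocks 0 (C - C') 0 0 := by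
    simp only [cm, Matrix.fromBlocks_multiply]
    ext (i | i) (j | j) <;> simp [Matrix.fromBlocks]
  have hE : cm (diagY A₂) (diagY A₁)
      = Matrix.fromBlocks (cm A₂ A₁) 0 0 (cm (refl2 A₂) (refl2 A₁)) :=
    cm_fromBlocks_diag _ _ _ _
  rw [hsplit, hdiag, hY, hE, Matrix.fromBlocks_multiply]
  have h0 : (C - C') * cm (refl2 A₂) (refl2 A₁) = 0 :=
    su_mul_su (su_sub hCsu hC'su) (su_cm (refl2_ut2 h₂) (refl2_ut2 h₁))
  simp [h0]
end

section
/- Let W = (e₂₂ 0; 0 e₁₁) ∈ 𝒜. Then for arbitrary Y₁,...,Yₙ ∈ 𝒜 with n ≥ 4, one has [Y₃,...,Yₙ,W]·[Y₂,Y₁] = [Y₃,...,Yₙ]·[Y₂,Y₁]. -/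
open Matrix

/-- The matrix W = (e₂₂ 0; 0 e₁₁), i.e. diag(0,1,1,0). -/
def Wmat (F : Type*) [Field F] : Matrix (Fin 4) (Fin 4) F :=
  Matrix.diagonal ![0, 1, 1, 0]

lemma memA_cm {F : Type*} [Field F] {A B : Matrix (Fin 4) (Fin 4) F}
    (hA : memA A) (hB : memA B) : memA (cm A B) := by
  obtain ⟨hA1, hA2⟩ := hA
  obtain ⟨hB1, hB2⟩ := hB
  constructor
  · exact (hA1.mul hB1).sub (hB1.mul hA1)
  · have a10 : A 1 0 = 0 := hA1 (by decide)
    have b10 : B 1 0 = 0 := hB1 (by decide)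
    have a32 : A 3 2 = 0 := hA1 (by decide)
    have b32 : B 3 2 = 0 := hB1 (by decide)
    simp [cm, Matrix.mul_apply, Fin.sum_univ_four, a10, b10, a32, b32, hA2, hB2]

lemma diag_cm {F : Type*} [Field F] {A B : Matrix (Fin 4) (Fin 4) F}
    (hA : UT4 A) (hB : UT4 B) (i : Fin 4) : cm A B i i = 0 := by
  have h : ∀ (X Y : Matrix (Fin 4) (Fin 4) F), UT4 X → UT4 Y →
      (X * Y) i i = X i i * Y i i := by
    intro X Y hX hY
    rw [Matrix.mul_apply]
    rw [Finset.sum_eq_single i]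
    · intro k _ hk
      rcases lt_or_gt_of_ne hk with h | h
      · rw [hX (show (id k : Fin 4) < id i from h), zero_mul]
      · rw [hY (show (id i : Fin 4) < id k from h), mul_zero]
    · simp
  simp [cm, h A B hA hB, h B A hB hA, mul_comm]

lemma memA_lcomm {F : Type*} [Field F] (L : List (Matrix (Fin 4) (Fin 4) F))
    (x : Matrix (Fin 4) (Fin 4) F) (hx : memA x) (hL : ∀ M ∈ L, memA M) :
    memA (lcomm x L) := by
  induction L generalizing x with
  | nil => exact hx
  | cons a L ih =>
      have : lcomm x (a :: L) = lcomm (cm x a) L := rfl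
      rw [this]
      exact ih (cm x a) (memA_cm hx (hL a (by simp))) fun M hM => hL M (by simp [hM])

theorem lcomm_with_W {F : Type*} [Field F]
    (Y₁ Y₂ Y₃ : Matrix (Fin 4) (Fin 4) F)
    (h₁ : memA Y₁) (h₂ : memA Y₂) (h₃ : memA Y₃)
    (rest : List (Matrix (Fin 4) (Fin 4) F)) (hrest : rest ≠ [])
    (hmem : ∀ M ∈ rest, memA M) :
    lcomm Y₃ (rest ++ [Wmat F]) * cm Y₂ Y₁ = lcomm Y₃ rest * cm Y₂ Y₁ := by
  set X := lcomm Y₃ rest with hXdef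
  set C := cm Y₂ Y₁ with hCdef
  have hstep : lcomm Y₃ (rest ++ [Wmat F]) = cm X (Wmat F) := by
    rw [lcomm, List.foldl_append]; rfl
  rw [hstep]
  have hXA : memA X := memA_lcomm rest Y₃ h₃ hmem
  -- diagonal of X is zero since rest ≠ []
  have hXdiag : ∀ i, X i i = 0 := by
    rcases rest.eq_nil_or_concat with rfl | ⟨l, y, rfl⟩
    · exact absurd rfl hrest
    · intro i
      have hXeq : X = cm (lcomm Y₃ l) y := by
        rw [hXdef, List.concat_eq_append, lcomm, List.foldl_append]; rfl
      have hl : ∀ M ∈ l, memA M := fun M hM => hmem M (by simp [hM])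
      have hy : memA y := hmem y (by simp)
      rw [hXeq]
      exact diag_cm (memA_lcomm l Y₃ h₃ hl).1 hy.1 i
  have hCA : memA C := memA_cm h₂ h₁
  have hC3 : ∀ j, C 3 j = 0 := by
    intro j
    fin_cases j
    · exact hCA.1 (by decide)
    · exact hCA.1 (by decide)
    · exact hCA.1 (by decide)
    · exact diag_cm h₂.1 h₁.1 3
  -- lower entries of X
  have x10 : X 1 0 = 0 := hXA.1 (by decide)
  have x20 : X 2 0 = 0 := hXA.1 (by decide)
  have x21 : X 2 1 = 0 := hXA.1 (by decide)
  have x30 : X 3 0 = 0 := hXA.1 (by decide)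
  have x31 : X 3 1 = 0 := hXA.1 (by decide)
  have x32 : X 3 2 = 0 := hXA.1 (by decide)
  have x12 : X 1 2 = 0 := hXA.2
  have x00 := hXdiag 0
  have x11 := hXdiag 1
  have x22 := hXdiag 2
  have x33 := hXdiag 3
  ext i j
  simp only [cm, Wmat, Matrix.sub_mul, Matrix.sub_apply, Matrix.mul_apply,
    Matrix.mul_diagonal, Matrix.diagonal_mul, Fin.sum_univ_four]
  fin_cases i <;>
    simp [x00, x11, x22, x33, x10, x20, x21, x30, x31, x32, x12, hC3 j]
end

section
/- The polynomial [y₁,z₁][y₂,z₂][y₃,z₃] is not a *-polynomial identity of UT₄(F) with the reflection involution: there exist symmetric Y₁,Y₂,Y₃ and skew-symmetric Z₁,Z₂,Z₃ in UT₄(F) such that [Y₁,Z₁][Y₂,Z₂][Y₃,Z₃] ≠ 0. -/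
set_option maxHeartbeats 1000000


open Matrix

private def Ymat (F : Type*) [Field F] : Matrix (Fin 4) (Fin 4) F :=
  Matrix.of fun i j => if (i = 0 ∧ j = 0) ∨ (i = 3 ∧ j = 3) then 1 else 0

private def Y2mat (F : Type*) [Field F] : Matrix (Fin 4) (Fin 4) F :=
  Matrix.of fun i j => if i = 1 ∧ j = 2 then 1 else 0

private def Z1mat (F : Type*) [Field F] : Matrix (Fin 4) (Fin 4) F :=
  Matrix.of fun i j => if i = 0 ∧ j = 1 then 1 else if i = 2 ∧ j = 3 then -1 else 0

private def Z2mat (F : Type*) [Field F] : Matrix (Fin 4) (Fin 4) F :=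
  Matrix.of fun i j => if i = 1 ∧ j = 1 then 1 else if i = 2 ∧ j = 2 then -1 else 0

private lemma fin4_val3 : ((3 : Fin 4) : ℕ) = 3 := rfl
private lemma fin4_val2 : ((2 : Fin 4) : ℕ) = 2 := rfl
private lemma fin4_val1 : ((1 : Fin 4) : ℕ) = 1 := rfl
private lemma fin4_val0 : ((0 : Fin 4) : ℕ) = 0 := rfl

theorem not_star_identity_UT4 {F : Type*} [Field F] (h2 : (2 : F) ≠ 0) :
    ∃ Y₁ Y₂ Y₃ Z₁ Z₂ Z₃ : Matrix (Fin 4) (Fin 4) F,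
      UT4 Y₁ ∧ UT4 Y₂ ∧ UT4 Y₃ ∧ UT4 Z₁ ∧ UT4 Z₂ ∧ UT4 Z₃ ∧
      reflInv Y₁ = Y₁ ∧ reflInv Y₂ = Y₂ ∧ reflInv Y₃ = Y₃ ∧
      reflInv Z₁ = -Z₁ ∧ reflInv Z₂ = -Z₂ ∧ reflInv Z₃ = -Z₃ ∧
      (Y₁ * Z₁ - Z₁ * Y₁) * (Y₂ * Z₂ - Z₂ * Y₂) * (Y₃ * Z₃ - Z₃ * Y₃) ≠ 0 := by
  refine ⟨Ymat F, Y2mat F, Ymat F, Z1mat F, Z2mat F, Z1mat F,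
          ?hY, ?hY2, ?hY, ?hZ1, ?hZ2, ?hZ1, ?sY, ?sY2, ?sY, ?sZ1, ?sZ2, ?sZ1, ?prod⟩
  case hY => intro i j h; fin_cases i <;> fin_cases j <;> simp_all [Ymat]
  case hY2 => intro i j h; fin_cases i <;> fin_cases j <;> simp_all [Y2mat]
  case hZ1 => intro i j h; fin_cases i <;> fin_cases j <;> simp_all [Z1mat]
  case hZ2 => intro i j h; fin_cases i <;> fin_cases j <;> simp_all [Z2mat]
  case sY => ext i j; fin_cases i <;> fin_cases j <;>
      simp [reflInv, J4, Ymat, Matrix.mul_apply, Fin.sum_univ_four, fin4_val0, fin4_val1, fin4_val2, fin4_val3]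
  case sY2 => ext i j; fin_cases i <;> fin_cases j <;>
      simp [reflInv, J4, Y2mat, Matrix.mul_apply, Fin.sum_univ_four, fin4_val0, fin4_val1, fin4_val2, fin4_val3]
  case sZ1 => ext i j; fin_cases i <;> fin_cases j <;>
      simp [reflInv, J4, Z1mat, Matrix.mul_apply, Fin.sum_univ_four, fin4_val0, fin4_val1, fin4_val2, fin4_val3]
  case sZ2 => ext i j; fin_cases i <;> fin_cases j <;>
      simp [reflInv, J4, Z2mat, Matrix.mul_apply, Fin.sum_univ_four, fin4_val0, fin4_val1, fin4_val2, fin4_val3]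
  case prod =>
    intro h
    have := congrFun (congrFun h 0) 3
    simp [Ymat, Y2mat, Z1mat, Z2mat, Matrix.mul_apply, Fin.sum_univ_four, fin4_val0, fin4_val1, fin4_val2, fin4_val3] at this
    exact h2 (by linear_combination -this)
end
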